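/- arXiv:2111.09305 — 11 statements merged into one kernel-verified Lean document; each statement's English description precedes it below -/
import Mathlib

section
/- Let 𝔽 be a finite field and let P₁,…,Pₘ, Q ∈ 𝔽[x₁,…,xₙ] be polynomials of total degree at most d. If every common zero of P₁,…,Pₘ in 𝔽ⁿ is also a zero of Q, then there exist polynomials R₁,…,Rₘ ∈ 𝔽[x₁,…,xₙ], each of total degree at most m·d·(|𝔽|−1), such that Q(x) = Σᵢ₌₁ᵐ Rᵢ(x)·Pᵢ(x) for every x ∈ 𝔽ⁿ. -/
open MvPolynomial Finset

/-- Sharp finite-field Nullstellensatz (Theorem 1). -/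
theorem statement0 {F : Type*} [Field F] [Fintype F] {n m d : ℕ}
    (P : Fin m → MvPolynomial (Fin n) F) (Q : MvPolynomial (Fin n) F)
    (hPdeg : ∀ i, (P i).totalDegree ≤ d) (hQdeg : Q.totalDegree ≤ d)
    (hzero : ∀ x : Fin n → F, (∀ i, MvPolynomial.eval x (P i) = 0) →
      MvPolynomial.eval x Q = 0) :
    ∃ R : Fin m → MvPolynomial (Fin n) F,
      (∀ i, (R i).totalDegree ≤ m * d * (Fintype.card F - 1)) ∧
      ∀ x : Fin n → F,
        MvPolynomial.eval x Q = ∑ i, MvPolynomial.eval x (R i) * MvPolynomial.eval x (P i) := by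
  classical
  set q := Fintype.card F with hq
  have hq2 : 2 ≤ q := Fintype.one_lt_card
  set R : Fin m → MvPolynomial (Fin n) F := fun i =>
    Q * (P i) ^ (q - 2) * ∏ j ∈ Finset.univ.filter (fun j => j < i), (1 - (P j) ^ (q - 1))
    with hR
  have hfac : ∀ j : Fin m, (1 - (P j) ^ (q - 1)).totalDegree ≤ (q - 1) * d := by
    intro j
    have h1 : ((1 : MvPolynomial (Fin n) F) + (-(P j ^ (q - 1)))).totalDegree ≤
        max (1 : MvPolynomial (Fin n) F).totalDegree (-(P j ^ (q - 1))).totalDegree :=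
      totalDegree_add _ _
    rw [← sub_eq_add_neg] at h1
    refine h1.trans ?_
    rw [totalDegree_one, totalDegree_neg]
    simp only [max_le_iff, Nat.zero_le, true_and]
    exact (totalDegree_pow _ _).trans (Nat.mul_le_mul_left _ (hPdeg j))
  refine ⟨R, ?_, ?_⟩
  · intro i
    have hprod : (∏ j ∈ Finset.univ.filter (fun j => j < i),
        (1 - (P j) ^ (q - 1))).totalDegree ≤ (i : ℕ) * ((q - 1) * d) := by
      refine (totalDegree_finset_prod _ _).trans ?_
      refine (Finset.sum_le_card_nsmul _ _ ((q - 1) * d) (fun j _ => hfac j)).trans ?_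
      have hcard : (Finset.univ.filter (fun j => j < i)).card = (i : ℕ) := by
        have : Finset.univ.filter (fun j => j < i) = Finset.Iio i := by
          ext j; simp
        rw [this, Fin.card_Iio]
      rw [hcard, smul_eq_mul]
    have h1 : (R i).totalDegree ≤
        Q.totalDegree + ((P i) ^ (q - 2)).totalDegree +
          (∏ j ∈ Finset.univ.filter (fun j => j < i), (1 - (P j) ^ (q - 1))).totalDegree := by
      refine (totalDegree_mul _ _).trans ?_
      exact Nat.add_le_add_right (totalDegree_mul _ _) _
    refine h1.trans ?_
    have h2 : ((P i) ^ (q - 2)).totalDegree ≤ (q - 2) * d :=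
      (totalDegree_pow _ _).trans (Nat.mul_le_mul_left _ (hPdeg i))
    have h3 : Q.totalDegree + ((P i) ^ (q - 2)).totalDegree +
        (∏ j ∈ Finset.univ.filter (fun j => j < i), (1 - (P j) ^ (q - 1))).totalDegree ≤
        d + (q - 2) * d + (i : ℕ) * ((q - 1) * d) :=
      Nat.add_le_add (Nat.add_le_add hQdeg h2) hprod
    refine h3.trans ?_
    obtain ⟨e, he⟩ : ∃ e, q = e + 2 := ⟨q - 2, by omega⟩
    have hi : (i : ℕ) + 1 ≤ m := i.2
    rw [he]
    have h4 : e + 2 - 2 = e := by omega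
    have h5 : e + 2 - 1 = e + 1 := by omega
    rw [h4, h5]
    have : d + e * d + (i : ℕ) * ((e + 1) * d) = ((i : ℕ) + 1) * ((e + 1) * d) := by ring
    rw [this]
    calc ((i : ℕ) + 1) * ((e + 1) * d) ≤ m * ((e + 1) * d) :=
          Nat.mul_le_mul_right _ hi
      _ = m * d * (e + 1) := by ring
  · intro x
    set a : Fin m → F := fun i => MvPolynomial.eval x (P i) with ha
    set eQ : F := MvPolynomial.eval x Q with heQ
    have hterm : ∀ i ∈ Finset.univ, MvPolynomial.eval x (R i) * MvPolynomial.eval x (P i) =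
        eQ * (a i ^ (q - 1) * ∏ j ∈ Finset.univ.filter (fun j => j < i), (1 - a j ^ (q - 1))) := by
      intro i _
      have hev : MvPolynomial.eval x (R i) =
          eQ * (a i) ^ (q - 2) * ∏ j ∈ Finset.univ.filter (fun j => j < i),
            (1 - (a j) ^ (q - 1)) := by
        simp [hR, ha, heQ]
      rw [hev]
      have hp : (a i) ^ (q - 2) * a i = (a i) ^ (q - 1) := by
        rw [← pow_succ]; congr 1; omega
      linear_combination (eQ * ∏ j ∈ Finset.univ.filter (fun j => j < i),
        (1 - (a j) ^ (q - 1))) * hp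
    rw [Finset.sum_congr rfl hterm, ← Finset.mul_sum]
    have htel : ∑ i : Fin m, a i ^ (q - 1) *
        ∏ j ∈ Finset.univ.filter (fun j => j < i), (1 - a j ^ (q - 1)) =
        1 - ∏ i : Fin m, (1 - a i ^ (q - 1)) := by
      have := Finset.prod_one_sub_ordered (Finset.univ : Finset (Fin m))
        (fun i => a i ^ (q - 1))
      rw [this]; ring
    rw [htel, mul_sub, mul_one]
    have hzero' : eQ * ∏ i : Fin m, (1 - a i ^ (q - 1)) = 0 := by
      by_cases hall : ∀ i, a i = 0
      · have h0 : eQ = 0 := hzero x hall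
        rw [h0]; ring
      · push_neg at hall
        obtain ⟨i, hi⟩ := hall
        have h1 : a i ^ (q - 1) = 1 := FiniteField.pow_card_sub_one_eq_one _ hi
        rw [Finset.prod_eq_zero (Finset.mem_univ i) (by rw [h1]; ring)]
        ring
    rw [hzero', sub_zero]
end

section
/- Let 𝔽 be a finite field and let P₁,…,Pₘ ∈ 𝔽[x₁,…,xₙ] be polynomials of total degree at most d with no common zero in 𝔽ⁿ. Then there exist polynomials R₁,…,Rₘ ∈ 𝔽[x₁,…,xₙ], each of total degree at most m·d·(|𝔽|−1) − d, such that Σᵢ₌₁ᵐ Rᵢ(x)·Pᵢ(x) = 1 for every x ∈ 𝔽ⁿ. -/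
open MvPolynomial Finset

private lemma tele_aux {F : Type*} [CommRing F] (b : ℕ → F) (m : ℕ) :
    ∑ i ∈ range m, b i * ∏ j ∈ range i, (1 - b j)
      = 1 - ∏ j ∈ range m, (1 - b j) := by
  induction m with
  | zero => simp
  | succ k ih => rw [sum_range_succ, ih, prod_range_succ]; ring

/-- Weak finite-field Nullstellensatz with the bound md(|F|-1) - d. -/
theorem statement1 {F : Type*} [Field F] [Fintype F] {n m d : ℕ}
    (P : Fin m → MvPolynomial (Fin n) F)
    (hPdeg : ∀ i, (P i).totalDegree ≤ d)
    (hzero : ∀ x : Fin n → F, ∃ i, MvPolynomial.eval x (P i) ≠ 0) :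
    ∃ R : Fin m → MvPolynomial (Fin n) F,
      (∀ i, (R i).totalDegree ≤ m * d * (Fintype.card F - 1) - d) ∧
      ∀ x : Fin n → F,
        ∑ i, MvPolynomial.eval x (R i) * MvPolynomial.eval x (P i) = 1 := by
  classical
  set q := Fintype.card F with hq
  have hq2 : 2 ≤ q := Fintype.one_lt_card
  have hmpos : 0 < m := (hzero (fun _ => 0)).choose.pos
  set Pe : ℕ → MvPolynomial (Fin n) F := fun j => if h : j < m then P ⟨j, h⟩ else 0
    with hPe
  have hPedeg : ∀ j, (Pe j).totalDegree ≤ d := by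
    intro j; by_cases h : j < m <;> simp [hPe, h, hPdeg]
  refine ⟨fun i => P i ^ (q - 2) * ∏ j ∈ range i.1, (1 - Pe j ^ (q - 1)), ?_, ?_⟩
  · intro i
    have h1 : ∀ j, (1 - Pe j ^ (q - 1)).totalDegree ≤ (q - 1) * d := by
      intro j
      have : (1 - Pe j ^ (q - 1)).totalDegree ≤
          max (1 : MvPolynomial (Fin n) F).totalDegree ((Pe j ^ (q - 1)).totalDegree) := by
        rw [sub_eq_add_neg]
        refine (totalDegree_add _ _).trans_eq ?_
        rw [totalDegree_neg]
      refine this.trans ?_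
      simp only [totalDegree_one, max_le_iff]
      exact ⟨Nat.zero_le _, (totalDegree_pow _ _).trans (Nat.mul_le_mul_left _ (hPedeg j))⟩
    have hprod : (∏ j ∈ range i.1, (1 - Pe j ^ (q - 1))).totalDegree ≤
        i.1 * ((q - 1) * d) := by
      refine (totalDegree_finset_prod _ _).trans ?_
      calc ∑ j ∈ range i.1, (1 - Pe j ^ (q - 1)).totalDegree
          ≤ ∑ _j ∈ range i.1, (q - 1) * d := Finset.sum_le_sum fun j _ => h1 j
        _ = i.1 * ((q - 1) * d) := by simp [mul_comm]
    have hpw : (P i ^ (q - 2)).totalDegree ≤ (q - 2) * d :=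
      (totalDegree_pow _ _).trans (Nat.mul_le_mul_left _ (hPdeg i))
    refine (totalDegree_mul _ _).trans ?_
    obtain ⟨a, hqa⟩ : ∃ a, q = a + 2 := ⟨q - 2, by omega⟩
    obtain ⟨k, rfl⟩ : ∃ k, m = k + 1 := ⟨m - 1, by omega⟩
    rw [hqa] at hpw hprod ⊢
    have hik : i.1 ≤ k := Nat.lt_succ_iff.mp i.2
    have h2 : a + 2 - 1 = a + 1 := rfl
    have hsub : (k + 1) * d * (a + 2 - 1) - d = a * d + k * ((a + 2 - 1) * d) := by
      rw [h2]
      have h : (k + 1) * d * (a + 1) = d + (a * d + k * ((a + 1) * d)) := by ring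
      rw [h, Nat.add_sub_cancel_left]
    rw [hsub]
    have : (a + 2 - 2) * d = a * d := by norm_num
    rw [this] at hpw
    exact Nat.add_le_add hpw (hprod.trans (Nat.mul_le_mul_right _ hik))
  · intro x
    set b : ℕ → F := fun j => (eval x (Pe j)) ^ (q - 1) with hb
    have hterm : ∀ i : Fin m,
        eval x (P i ^ (q - 2) * ∏ j ∈ range i.1, (1 - Pe j ^ (q - 1))) * eval x (P i)
          = b i.1 * ∏ j ∈ range i.1, (1 - b j) := by
      intro i
      have hPei : Pe i.1 = P i := by simp [hPe, i.2]
      simp only [map_mul, map_prod, map_sub, map_one, map_pow, hb, hPei]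
      rw [mul_comm (eval x (P i) ^ (q - 2)) _, mul_assoc, mul_comm]
      congr 1
      have hqs : q - 1 = (q - 2) + 1 := by omega
      rw [hqs, pow_succ]
    rw [Fintype.sum_congr _ _ hterm]
    have := Fin.sum_univ_eq_sum_range (fun i => b i * ∏ j ∈ range i, (1 - b j)) m
    rw [this, tele_aux]
    have hzero' : ∏ j ∈ range m, (1 - b j) = 0 := by
      obtain ⟨i, hi⟩ := hzero x
      refine Finset.prod_eq_zero (Finset.mem_range.mpr i.2) ?_
      have hPei : Pe i.1 = P i := by simp [hPe, i.2]
      rw [hb]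
      simp only [hPei]
      rw [FiniteField.pow_card_sub_one_eq_one _ hi, sub_self]
    rw [hzero', sub_zero]
end

section
/- Let 𝔽 be a finite field with q = |𝔽| and let P₁,…,Pₘ ∈ 𝔽[x₁,…,xₙ]. Define Iᵢ = Pᵢ^{q−2} · Π_{j=i+1}^{m} (1 − Pⱼ^{q−1}) for each 1 ≤ i ≤ m. Then for every x ∈ 𝔽ⁿ, Σᵢ₌₁ᵐ Iᵢ(x)·Pᵢ(x) equals 1 if some Pᵢ(x) ≠ 0, and equals 0 if P₁(x) = ⋯ = Pₘ(x) = 0. -/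
/-- The explicit polynomials I_i give an indicator of non-membership in the zero set. -/
theorem statement2 {F : Type*} [Field F] [Fintype F] {n m : ℕ} (q : ℕ)
    (hq : q = Fintype.card F)
    (P I : Fin m → MvPolynomial (Fin n) F)
    (hI : ∀ i, I i = P i ^ (q - 2) * ∏ j ∈ Finset.Ioi i, (1 - P j ^ (q - 1))) :
    ∀ x : Fin n → F,
      ((∃ i, MvPolynomial.eval x (P i) ≠ 0) →
        ∑ i, MvPolynomial.eval x (I i) * MvPolynomial.eval x (P i) = 1) ∧
      ((∀ i, MvPolynomial.eval x (P i) = 0) →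
        ∑ i, MvPolynomial.eval x (I i) * MvPolynomial.eval x (P i) = 0) := by
  intro x
  have hq2 : 2 ≤ q := by rw [hq]; exact Fintype.one_lt_card
  have hsub : q - 2 + 1 = q - 1 := by omega
  have hq1 : q - 1 ≠ 0 := by omega
  set a : Fin m → F := fun j => MvPolynomial.eval x (P j) ^ (q - 1) with ha
  have hterm : ∀ j, MvPolynomial.eval x (I j) * MvPolynomial.eval x (P j)
      = a j * ∏ k ∈ Finset.Ioi j, (1 - a k) := by
    intro j
    rw [hI j]
    simp only [map_mul, map_prod, map_sub, map_pow, map_one]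
    simp only [ha]
    rw [mul_right_comm, ← pow_succ, hsub]
  have hone : ∀ j, MvPolynomial.eval x (P j) ≠ 0 → a j = 1 := by
    intro j hj
    rw [ha]
    simpa [hq] using FiniteField.pow_card_sub_one_eq_one _ hj
  have hzero : ∀ j, MvPolynomial.eval x (P j) = 0 → a j = 0 := by
    intro j hj
    simp [ha, hj, zero_pow hq1]
  constructor
  · rintro ⟨i, hi⟩
    have hm : 0 < m := i.pos
    classical
    set T : Finset (Fin m) := Finset.univ.filter (fun j => MvPolynomial.eval x (P j) ≠ 0) with hT
    have hiT : i ∈ T := by simp [hT, hi]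
    have hne : T.Nonempty := ⟨i, hiT⟩
    set i0 := T.max' hne with hi0
    have hi0T : i0 ∈ T := T.max'_mem hne
    have hi0ne : MvPolynomial.eval x (P i0) ≠ 0 := by
      simpa [hT] using hi0T
    rw [Fintype.sum_eq_single i0]
    · rw [hterm, hone i0 hi0ne, one_mul]
      apply Finset.prod_eq_one
      intro k hk
      have hk2 : i0 < k := Finset.mem_Ioi.mp hk
      have : MvPolynomial.eval x (P k) = 0 := by
        by_contra h
        exact absurd (T.le_max' k (by simp [hT, h])) (not_le.mpr hk2)
      rw [hzero k this]; ring
    · intro j hj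
      rw [hterm]
      by_cases hz : MvPolynomial.eval x (P j) = 0
      · rw [hzero j hz, zero_mul]
      · have hjT : j ∈ T := by simp [hT, hz]
        have : j < i0 := lt_of_le_of_ne (T.le_max' j hjT) hj
        rw [Finset.prod_eq_zero (Finset.mem_Ioi.mpr this), mul_zero]
        rw [hone i0 hi0ne]; ring
  · intro h
    apply Finset.sum_eq_zero
    intro j _
    simp [h j]
end

section
/- Let q be a prime with q ≡ 3 (mod 4) and let 𝔽 = 𝔽_q. Then the polynomial P = x² + 1 ∈ 𝔽[x] has no root in 𝔽, and every polynomial R ∈ 𝔽[x] satisfying R(x)·P(x) = 1 for all x ∈ 𝔽 has degree at least q − 1. -/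
open Finset Polynomial

/-- Lower bound showing dependence on the field size, over prime fields. -/
theorem statement6 (q : ℕ) (hq : Nat.Prime q) (hq4 : q % 4 = 3)
    {F : Type*} [Field F] [Fintype F] (hcard : Fintype.card F = q) :
    (∀ x : F, x ^ 2 + 1 ≠ 0) ∧
    (∀ R : Polynomial F, (∀ x : F, R.eval x * (x ^ 2 + 1) = 1) →
      q - 1 ≤ R.natDegree) := by
  classical
  have h1 : ∀ x : F, x ^ 2 + 1 ≠ 0 := by
    intro x hx
    have : IsSquare (-1 : F) := ⟨x, by linear_combination -hx⟩
    rw [FiniteField.isSquare_neg_one_iff, hcard, hq4] at this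
    exact this rfl
  refine ⟨h1, ?_⟩
  intro R hR
  by_contra hlt
  push_neg at hlt
  have hqcast : ((q : ℕ) : F) = 0 := by rw [← hcard]; exact FiniteField.cast_card_eq_zero F
  set f : F → F := fun x => (x ^ 2 + 1)⁻¹ with hf
  have hRf : ∀ x : F, R.eval x = f x :=
    fun x => eq_inv_of_mul_eq_one_left (hR x)
  set T : F := ∑ x ∈ univ.erase (0:F), f x with hT
  have hbij : T = ∑ x ∈ univ.erase (0:F), f x⁻¹ := by
    rw [hT]
    apply Finset.sum_nbij' (fun x => x⁻¹) (fun x => x⁻¹)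
    · intro a ha; simp only [mem_erase, mem_univ, and_true] at ha ⊢
      exact inv_ne_zero ha
    · intro a ha; simp only [mem_erase, mem_univ, and_true] at ha ⊢
      exact inv_ne_zero ha
    · intro a _; exact inv_inv a
    · intro a _; exact inv_inv a
    · intro a _; rw [inv_inv]
  have hstep : ∀ x : F, x ≠ 0 → f x⁻¹ = 1 - f x := by
    intro x hx
    have h1x := h1 x
    have h1x' : (1:F) + x ^ 2 ≠ 0 := by rwa [add_comm] at h1x
    simp only [hf]
    rw [inv_pow, ← one_div, ← one_div]
    field_simp [h1x']
    ring
  have hcastcard : (↑(Fintype.card F - 1) : F) = -1 := by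
    rw [Nat.cast_sub Fintype.card_pos, hcard, hqcast]; ring
  have hTT : T + T = -1 := by
    nth_rewrite 1 [hbij]
    rw [Finset.sum_congr rfl (fun x hx => hstep x (Finset.mem_erase.mp hx).1),
      Finset.sum_sub_distrib, Finset.sum_const, Finset.card_erase_of_mem (Finset.mem_univ _),
      Finset.card_univ, nsmul_eq_mul, mul_one, hcastcard, ← hT]
    ring
  have hf0 : f 0 = 1 := by simp [hf]
  have hS : ∑ x : F, R.eval x = f 0 + T := by
    rw [Finset.sum_congr rfl (fun x _ => hRf x),
      hT, ← Finset.add_sum_erase _ f (Finset.mem_univ (0:F))]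
  have hSne : ∑ x : F, R.eval x ≠ 0 := by
    rw [hS, hf0]
    intro h
    have : (1 : F) = 0 := by linear_combination 2 * h - hTT
    exact one_ne_zero this
  have hSzero : ∑ x : F, R.eval x = 0 := by
    have heval : ∀ x : F, R.eval x = ∑ i ∈ Finset.range (R.natDegree + 1), R.coeff i * x ^ i := by
      intro x; rw [eval_eq_sum_range]
    rw [Finset.sum_congr rfl (fun x _ => heval x), Finset.sum_comm]
    apply Finset.sum_eq_zero
    intro i hi
    rw [← Finset.mul_sum]
    have hz : ∑ x : F, x ^ i = 0 := by
      apply FiniteField.sum_pow_lt_card_sub_one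
      rw [hcard]
      simp only [Finset.mem_range] at hi
      have := hq.two_le
      omega
    rw [hz, mul_zero]
  exact hSne hSzero
end

section
/- Let p be a prime with p ≡ 3 (mod 4), let k ≥ 1 be an odd integer, let q = pᵏ, and let 𝔽 = 𝔽_q. Then every polynomial R ∈ 𝔽[x] satisfying R(x)·(x² + 1) = 1 for all x ∈ 𝔽 has degree at least q − 1. -/
/-!
A polynomial of degree `< q - 1` sums to zero over `𝔽_q`, since `∑ x, x ^ i = 0` for `i < q - 1`.
On the other hand `f x = (x ^ 2 + 1)⁻¹` satisfies `f x + f x⁻¹ = 1` for `x ≠ 0` and `f 0 = 1`, so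
pairing `x` with `x⁻¹` gives `2 * ∑ x, f x = q + 1 = 1`; hence `∑ x, f x ≠ 0`.
-/

open Polynomial

theorem inv_sq_add_one_add_inv_inv_sq_add_one {K : Type*} [Field K] {x : K} (hx : x ≠ 0)
    (h : x ^ 2 + 1 ≠ 0) :
    (x ^ 2 + 1)⁻¹ + (x⁻¹ ^ 2 + 1)⁻¹ = 1 := by
  have h' : 1 + x ^ 2 ≠ 0 := by rwa [add_comm]
  field_simp
  ring

namespace FiniteField

variable {F : Type*} [Field F] [Fintype F]

theorem sum_eval_eq_zero_of_natDegree_lt (R : F[X]) (hR : R.natDegree < Fintype.card F - 1) :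
    ∑ x : F, R.eval x = 0 := by
  simp_rw [eval_eq_sum_range]
  rw [Finset.sum_comm]
  refine Finset.sum_eq_zero fun i hi => ?_
  rw [← Finset.mul_sum, sum_pow_lt_card_sub_one F i (by grind), mul_zero]

theorem two_mul_sum_inv_sq_add_one (h : ∀ x : F, x ^ 2 + 1 ≠ 0) :
    2 * ∑ x : F, (x ^ 2 + 1)⁻¹ = 1 := by
  classical
  have hpair (x : F) :
      (x ^ 2 + 1)⁻¹ + (x⁻¹ ^ 2 + 1)⁻¹ = 1 + if x = 0 then 1 else 0 := by
    split_ifs with hx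
    · subst hx; norm_num
    · rw [inv_sq_add_one_add_inv_inv_sq_add_one hx (h x), add_zero]
  calc 2 * ∑ x : F, (x ^ 2 + 1)⁻¹
      = ∑ x : F, (x ^ 2 + 1)⁻¹ + ∑ x : F, (x⁻¹ ^ 2 + 1)⁻¹ := by
        rw [two_mul]
        congr 1
        exact (Equiv.sum_comp (Equiv.inv F) fun x => (x ^ 2 + 1)⁻¹).symm
    _ = ∑ x : F, (1 + if x = 0 then 1 else 0) := by
        rw [← Finset.sum_add_distrib]; exact Finset.sum_congr rfl fun x _ => hpair x
    _ = 1 := by simp [Finset.sum_add_distrib]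

theorem card_sub_one_le_natDegree_of_eval_mul_sq_add_one (R : F[X])
    (hR : ∀ x : F, R.eval x * (x ^ 2 + 1) = 1) : Fintype.card F - 1 ≤ R.natDegree := by
  have hne (x : F) : x ^ 2 + 1 ≠ 0 := right_ne_zero_of_mul_eq_one (hR x)
  have heval (x : F) : R.eval x = (x ^ 2 + 1)⁻¹ := eq_inv_of_mul_eq_one_left (hR x)
  by_contra! hdeg
  have hsum := two_mul_sum_inv_sq_add_one hne
  simp_rw [← heval, sum_eval_eq_zero_of_natDegree_lt R hdeg, mul_zero] at hsum
  exact zero_ne_one hsum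

end FiniteField

theorem statement8_general (p k : ℕ)
    {F : Type*} [Field F] [Fintype F] (hcard : Fintype.card F = p ^ k) :
    ∀ R : Polynomial F, (∀ x : F, R.eval x * (x ^ 2 + 1) = 1) →
      p ^ k - 1 ≤ R.natDegree := by
  intro R hR
  rw [← hcard]
  exact FiniteField.card_sub_one_le_natDegree_of_eval_mul_sq_add_one R hR

/-- Lower bound showing dependence on the field size, over non-prime fields. -/
theorem statement8 (p k : ℕ) (hp : p.Prime) (hp4 : p % 4 = 3) (hk : Odd k) (hk1 : 1 ≤ k)
    {F : Type*} [Field F] [Fintype F] (hcard : Fintype.card F = p ^ k) :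
    ∀ R : Polynomial F, (∀ x : F, R.eval x * (x ^ 2 + 1) = 1) →
      p ^ k - 1 ≤ R.natDegree :=
  statement8_general p k hcard
end

section
/- Let 𝔽 be a finite field in which −1 is not a square, and let H ∈ 𝔽[x₁,…,xₙ] be a nonconstant polynomial in which every variable xᵢ appears with individual degree at most 1 (so that H is multilinear). Set P = H² + 1. Then P has no zero in 𝔽ⁿ, and every polynomial R ∈ 𝔽[x₁,…,xₙ] satisfying R(x)·P(x) = 1 for all x ∈ 𝔽ⁿ has total degree at least deg(H)·(|𝔽|−1) = (1/2)·deg(P)·(|𝔽|−1). -/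
/-!
Let `d = deg H` and pick a monomial of `H` of degree `d`; as `H` is multilinear, it is
`∏_{j ∈ T} x_j` with `|T| = d`. If `deg R < d (q - 1)`, then the sum of `R` over the points of
`𝔽ⁿ` vanishing off `T` is zero: multiply `R` by the indicator `∏_{j ∉ T} (1 - x_j ^ (q - 1))` of
these points and use that a polynomial of degree `< n (q - 1)` sums to zero over `𝔽ⁿ`.
On the other hand, on these points `R = f ∘ h` with `f v = (v² + 1)⁻¹` and `h` the restriction
of `H`, a multilinear function of the variables in `T` with nonzero top coefficient. Summing out
one variable at a time (`h` is affine in it, so the inner sum is `∑ᵥ f v` or `q • f _ = 0`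
according as the slope is nonzero or not) gives `∑ f ∘ h = ± ∑ᵥ f v`, and
`∑ᵥ (v² + 1)⁻¹ = 1 / 2 ≠ 0`.
-/

open Finset MvPolynomial Function

section FiniteFieldSums

variable {F : Type*} [Field F]

theorem sq_add_one_ne_zero_of_not_isSquare (hsq : ¬IsSquare (-1 : F)) (u : F) :
    u ^ 2 + 1 ≠ 0 :=
  fun h => hsq ⟨u, by linear_combination -h⟩

theorem two_ne_zero_of_not_isSquare (hsq : ¬IsSquare (-1 : F)) : (2 : F) ≠ 0 :=
  fun h => hsq ⟨1, by linear_combination -h⟩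

variable [Fintype F]

/-- Pair `u` with `u⁻¹`: the two summands add up to `1`, except at `u = 0` where they add up
to `2`; hence twice the sum is `q + 1 = 1`. -/
theorem sum_inv_sq_add_one (hsq : ¬IsSquare (-1 : F)) : ∑ u : F, (u ^ 2 + 1)⁻¹ = 2⁻¹ := by
  classical
  have hpair : ∀ u : F, (u ^ 2 + 1)⁻¹ + (u⁻¹ ^ 2 + 1)⁻¹ = 1 + if u = 0 then 1 else 0 := by
    intro u
    rcases eq_or_ne u 0 with rfl | hu
    · norm_num
    · have h := sq_add_one_ne_zero_of_not_isSquare hsq u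
      rw [if_neg hu, add_zero, show u⁻¹ ^ 2 + 1 = (u ^ 2 + 1) / u ^ 2 by field_simp; ring,
        inv_div, ← one_div, ← add_div, add_comm 1, div_self h]
  have hinv : ∑ u : F, (u⁻¹ ^ 2 + 1)⁻¹ = ∑ u : F, (u ^ 2 + 1)⁻¹ :=
    Fintype.sum_equiv (Equiv.inv F) _ _ fun _ => rfl
  have htwice : 2 * ∑ u : F, (u ^ 2 + 1)⁻¹ = 1 := by
    rw [two_mul]
    nth_rw 2 [← hinv]
    rw [← sum_add_distrib, sum_congr rfl fun u _ => hpair u, sum_add_distrib, sum_ite_eq']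
    simp
  exact eq_inv_of_mul_eq_one_right htwice

theorem sum_comp_add_mul [DecidableEq F] (f : F → F) (a b : F) :
    ∑ u : F, f (a + u * b) = if b = 0 then 0 else ∑ v : F, f v := by
  split_ifs with hb
  · simp [hb]
  · exact Fintype.sum_equiv ((Equiv.mulRight₀ b hb).trans (Equiv.addLeft a)) _ _ fun _ => rfl

end FiniteFieldSums

section Multilinear

variable {R : Type*} [CommSemiring R] {ι : Type*} [DecidableEq ι]

def multilinearFun (c : Finset ι → R) (T : Finset ι) (x : ι → R) : R :=
  ∑ U ∈ T.powerset, c U * ∏ j ∈ U, x j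

theorem multilinearFun_insert_update {c : Finset ι → R} {i : ι} {s : Finset ι} (hi : i ∉ s)
    (x : ι → R) (u : R) :
    multilinearFun c (insert i s) (update x i u) =
      multilinearFun c s x + u * multilinearFun (fun U => c (insert i U)) s x := by
  have hU : ∀ U ∈ s.powerset, ∏ j ∈ U, update x i u j = ∏ j ∈ U, x j := fun U hU =>
    prod_congr rfl fun j hj => update_of_ne (ne_of_mem_of_not_mem (mem_powerset.1 hU hj) hi) _ _
  simp only [multilinearFun, sum_powerset_insert hi, mul_sum]
  congr 1
  · exact sum_congr rfl fun U h => by rw [hU U h]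
  · refine sum_congr rfl fun U h => ?_
    rw [prod_insert fun hiU => hi (mem_powerset.1 h hiU), hU U h, update_self]
    ring

variable [Fintype ι] [Fintype R]

variable (R) in
noncomputable def supportedOn (T : Finset ι) : Finset (ι → R) :=
  open Classical in {x | ∀ j ∉ T, x j = 0}

theorem mem_supportedOn {T : Finset ι} {x : ι → R} : x ∈ supportedOn R T ↔ ∀ j ∉ T, x j = 0 := by
  simp [supportedOn]

theorem sum_supportedOn_insert {M : Type*} [AddCommMonoid M] {i : ι} {s : Finset ι} (hi : i ∉ s)
    (φ : (ι → R) → M) :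
    ∑ x ∈ supportedOn R (insert i s), φ x = ∑ u : R, ∑ x ∈ supportedOn R s, φ (update x i u) := by
  rw [← sum_product']
  symm
  refine sum_nbij' (fun p => update p.2 i p.1) (fun x => (x i, update x i 0)) ?_ ?_ ?_ ?_
    fun _ _ => rfl
  · simp only [mem_product, mem_univ, true_and, mem_supportedOn, mem_insert, not_or]
    intro p hp j hj
    rw [update_of_ne hj.1, hp j hj.2]
  · simp only [mem_product, mem_univ, true_and, mem_supportedOn, mem_insert, not_or]
    intro x hx j hj
    rcases eq_or_ne j i with rfl | hji
    · simp
    · rw [update_of_ne hji, hx j ⟨hji, hj⟩]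
  · simp only [mem_product, mem_univ, true_and, mem_supportedOn]
    intro p hp
    rw [update_self, update_idem, ← hp i hi, update_eq_self]
  · simp

theorem multilinearFun_of_mem_supportedOn {c : Finset ι → R} {S T : Finset ι} (hTS : T ⊆ S)
    {x : ι → R} (hx : x ∈ supportedOn R T) :
    multilinearFun c S x = multilinearFun c T x := by
  refine (sum_subset (powerset_mono.2 hTS) fun U _ hU => ?_).symm
  obtain ⟨j, hjU, hjT⟩ := not_subset.1 (mt mem_powerset.2 hU)
  rw [prod_eq_zero hjU (mem_supportedOn.1 hx j hjT), mul_zero]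

end Multilinear

section MultilinearSums

variable {F : Type*} [Field F] [Fintype F] [DecidableEq F] {ι : Type*} [Fintype ι] [DecidableEq ι]

theorem sum_comp_multilinearFun_insert {i : ι} {s : Finset ι} (hi : i ∉ s) (c : Finset ι → F)
    (f : F → F) :
    ∑ x ∈ supportedOn F (insert i s), f (multilinearFun c (insert i s) x) =
      (∑ v, f v) * ∑ x ∈ supportedOn F s,
        if multilinearFun (fun U => c (insert i U)) s x = 0 then 0 else 1 := by
  rw [sum_supportedOn_insert hi, sum_comm, mul_sum]
  refine sum_congr rfl fun x _ => ?_
  simp only [multilinearFun_insert_update hi, sum_comp_add_mul]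
  split_ifs <;> simp

theorem sum_multilinearFun_ne_zero_indicator {s : Finset ι} {c : Finset ι → F} (hc : c s ≠ 0) :
    ∑ x ∈ supportedOn F s, (if multilinearFun c s x = 0 then 0 else 1 : F) = (-1) ^ #s := by
  induction s using Finset.induction_on generalizing c with
  | empty =>
    have h0 : supportedOn F (∅ : Finset ι) = {0} := by
      ext x; simp [mem_supportedOn, funext_iff]
    simp [h0, multilinearFun, hc]
  | insert i s hi ih =>
    rw [sum_comp_multilinearFun_insert hi c fun v => if v = 0 then 0 else 1, ih hc,
      card_insert_of_notMem hi]
    have hcount : ∑ v : F, (if v = 0 then 0 else 1 : F) = -1 := by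
      simp [sum_ite, filter_ne', Nat.cast_sub Fintype.card_pos]
    rw [hcount, pow_succ]
    ring

theorem sum_comp_multilinearFun {T : Finset ι} (hT : T.Nonempty) {c : Finset ι → F} (hc : c T ≠ 0)
    (f : F → F) :
    ∑ x ∈ supportedOn F T, f (multilinearFun c T x) = (-1) ^ (#T + 1) * ∑ v, f v := by
  obtain ⟨i, hi⟩ := hT
  rw [← insert_erase hi] at hc ⊢
  rw [sum_comp_multilinearFun_insert (notMem_erase i T),
    sum_multilinearFun_ne_zero_indicator (c := fun U => c (insert i U)) hc,
    card_insert_of_notMem (notMem_erase i T)]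
  ring

end MultilinearSums

section Polynomial

variable {σ : Type*}

theorem totalDegree_sq_add_one {R : Type*} [CommRing R] [IsDomain R] {H : MvPolynomial σ R}
    (hH : H.totalDegree ≠ 0) : (H ^ 2 + 1).totalDegree = 2 * H.totalDegree := by
  have hH0 : H ≠ 0 := by rintro rfl; simp at hH
  have hsq : (H ^ 2).totalDegree = 2 * H.totalDegree := by
    rw [sq, totalDegree_mul_of_isDomain hH0 hH0, two_mul]
  rw [totalDegree_add_eq_left_of_totalDegree_lt (by rw [totalDegree_one, hsq]; omega), hsq]

variable [DecidableEq σ]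

theorem toFinsupp_support_val_eq_self {m : σ →₀ ℕ} (hm : ∀ i, m i ≤ 1) :
    Multiset.toFinsupp m.support.val = m := by
  ext i
  simp only [Multiset.toFinsupp_apply, Multiset.count_eq_of_nodup m.support.nodup, mem_val,
    Finsupp.mem_support_iff]
  have := hm i
  split_ifs <;> omega

variable {R : Type*} [CommSemiring R]

theorem exists_card_eq_totalDegree_of_degreeOf_le_one {H : MvPolynomial σ R}
    (hH : ∀ i, H.degreeOf i ≤ 1) (hH0 : H ≠ 0) :
    ∃ T : Finset σ, #T = H.totalDegree ∧ H.coeff (Multiset.toFinsupp T.val) ≠ 0 := by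
  obtain ⟨m, hm, hmax⟩ := exists_mem_eq_sup H.support (support_nonempty.2 hH0)
    fun m => m.sum fun _ e => e
  have hm1 : ∀ i, m i ≤ 1 := fun i => degreeOf_le_iff.1 (hH i) m hm
  refine ⟨m.support, ?_, by rwa [toFinsupp_support_val_eq_self hm1, ← mem_support_iff]⟩
  rw [totalDegree, hmax, Finsupp.sum, card_eq_sum_ones]
  exact sum_congr rfl fun i hi =>
    ((hm1 i).antisymm (Nat.one_le_iff_ne_zero.2 (Finsupp.mem_support_iff.1 hi))).symm

theorem eval_eq_multilinearFun_coeff [Fintype σ] {H : MvPolynomial σ R}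
    (hH : ∀ i, H.degreeOf i ≤ 1) (x : σ → R) :
    eval x H = multilinearFun (fun U => H.coeff (Multiset.toFinsupp U.val)) univ x := by
  have hm1 : ∀ m ∈ H.support, ∀ i, m i ≤ 1 := fun m hm i => degreeOf_le_iff.1 (hH i) m hm
  rw [eval_eq]
  refine sum_of_injOn Finsupp.support ?_ (fun _ _ => by simp) ?_ ?_
  · intro m hm m' hm' h
    rw [← toFinsupp_support_val_eq_self (hm1 m hm), ← toFinsupp_support_val_eq_self (hm1 m' hm'),
      h]
  · intro U _ hU
    have hcoeff : H.coeff (Multiset.toFinsupp U.val) = 0 := by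
      by_contra hc
      exact hU ⟨_, mem_support_iff.2 hc, by simp⟩
    simp only [hcoeff, zero_mul]
  · intro m hm
    dsimp only
    rw [toFinsupp_support_val_eq_self (hm1 m hm)]
    refine congrArg _ (prod_congr rfl fun i hi => ?_)
    rw [(hm1 m hm i).antisymm (Nat.one_le_iff_ne_zero.2 (Finsupp.mem_support_iff.1 hi)), pow_one]

variable [Fintype σ] {F : Type*} [Field F] [Fintype F]

theorem sum_eval_supportedOn_eq_zero (T : Finset σ) {p : MvPolynomial σ F}
    (hp : p.totalDegree < #T * (Fintype.card F - 1)) :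
    ∑ x ∈ supportedOn F T, eval x p = 0 := by
  classical
  set G : MvPolynomial σ F := ∏ j ∈ Tᶜ, (1 - X j ^ (Fintype.card F - 1))
  have hG : ∀ x, eval x G = if x ∈ supportedOn F T then 1 else 0 := by
    intro x
    have hfactor : ∀ j, eval x (1 - X j ^ (Fintype.card F - 1)) = if x j = 0 then 1 else 0 := by
      intro j
      split_ifs with hx
      · simp [hx, Nat.sub_ne_zero_of_lt Fintype.one_lt_card]
      · simp [FiniteField.pow_card_sub_one_eq_one _ hx]
    simp only [G, map_prod, hfactor, prod_boole, mem_supportedOn, mem_compl]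
  have hGdeg : G.totalDegree ≤ #Tᶜ * (Fintype.card F - 1) := by
    refine (totalDegree_finsetProd _ _).trans (sum_le_card_nsmul _ _ _ fun j _ => ?_)
    refine (totalDegree_sub _ _).trans ?_
    simp
  have hpG : (p * G).totalDegree < (Fintype.card F - 1) * Fintype.card σ := by
    calc (p * G).totalDegree ≤ p.totalDegree + G.totalDegree := totalDegree_mul _ _
      _ < #T * (Fintype.card F - 1) + #Tᶜ * (Fintype.card F - 1) := by omega
      _ = (Fintype.card F - 1) * Fintype.card σ := by
        rw [← add_mul, card_add_card_compl, mul_comm]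
  calc ∑ x ∈ supportedOn F T, eval x p = ∑ x, eval x (p * G) := by simp [hG]
    _ = 0 := sum_eval_eq_zero _ hpG

end Polynomial

/-- Lower bound showing dependence on the degree d. -/
theorem statement10 {F : Type*} [Field F] [Fintype F] (hsq : ¬ IsSquare (-1 : F)) {n : ℕ}
    (H P : MvPolynomial (Fin n) F) (hHnc : H.totalDegree ≠ 0)
    (hml : ∀ i, H.degreeOf i ≤ 1) (hP : P = H ^ 2 + 1) :
    (∀ x : Fin n → F, MvPolynomial.eval x P ≠ 0) ∧
    (∀ R : MvPolynomial (Fin n) F,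
      (∀ x : Fin n → F, MvPolynomial.eval x R * MvPolynomial.eval x P = 1) →
      H.totalDegree * (Fintype.card F - 1) ≤ R.totalDegree) ∧
    2 * (H.totalDegree * (Fintype.card F - 1)) = P.totalDegree * (Fintype.card F - 1) := by
  classical
  have hPeval : ∀ x, eval x P = eval x H ^ 2 + 1 := fun x => by simp [hP]
  refine ⟨fun x => hPeval x ▸ sq_add_one_ne_zero_of_not_isSquare hsq _, fun R hR => ?_, ?_⟩
  · by_contra! hlt
    obtain ⟨T, hT, hc⟩ :=
      exists_card_eq_totalDegree_of_degreeOf_le_one hml (by rintro rfl; simp at hHnc)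
    have hTne : T.Nonempty := card_pos.1 (hT ▸ Nat.pos_of_ne_zero hHnc)
    have hRinv : ∀ x ∈ supportedOn F T, eval x R =
        (multilinearFun (fun U => H.coeff (Multiset.toFinsupp U.val)) T x ^ 2 + 1)⁻¹ := by
      intro x hx
      rw [eq_inv_of_mul_eq_one_left (hR x), hPeval, eval_eq_multilinearFun_coeff hml,
        multilinearFun_of_mem_supportedOn (subset_univ T) hx]
    have hsum := sum_eval_supportedOn_eq_zero T (hT ▸ hlt)
    rw [sum_congr rfl hRinv, sum_comp_multilinearFun hTne hc fun v => (v ^ 2 + 1)⁻¹,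
      sum_inv_sq_add_one hsq] at hsum
    exact mul_ne_zero (pow_ne_zero _ (neg_ne_zero.2 one_ne_zero))
      (inv_ne_zero (two_ne_zero_of_not_isSquare hsq)) hsum
  · rw [hP, totalDegree_sq_add_one hHnc, mul_assoc]
end

section
/- Let 𝔽 be a finite field with q = |𝔽|, let n ≤ N be positive integers, and let P₁,…,Pₘ ∈ 𝔽[x₁,…,xₙ], viewed inside 𝔽[x₁,…,x_N]. Suppose there exist polynomials R′₁,…,R′ₘ, C′₁,…,C′_N ∈ 𝔽[x₁,…,x_N] with 1 = Σᵢ₌₁ᵐ R′ᵢ·Pᵢ + Σᵢ₌₁ᴺ C′ᵢ·(xᵢ^q − xᵢ). Then there exist polynomials R₁,…,Rₘ, C₁,…,Cₙ ∈ 𝔽[x₁,…,xₙ] with 1 = Σᵢ₌₁ᵐ Rᵢ·Pᵢ + Σᵢ₌₁ⁿ Cᵢ·(xᵢ² − xᵢ) and deg(Rᵢ) ≤ deg(R′ᵢ) for every 1 ≤ i ≤ m. -/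
open MvPolynomial Finset

lemma aux_totalDegree_aeval_le {F : Type*} [CommRing F] {σ τ : Type*}
    (g : σ → MvPolynomial τ F) (hg : ∀ i, (g i).totalDegree ≤ 1)
    (p : MvPolynomial σ F) : (aeval g p).totalDegree ≤ p.totalDegree := by
  classical
  conv_lhs => rw [p.as_sum, map_sum]
  refine totalDegree_finsetSum_le fun d hd => ?_
  rw [aeval_monomial]
  refine (totalDegree_mul _ _).trans ?_
  rw [show algebraMap F (MvPolynomial τ F) (coeff d p) = C (coeff d p) from rfl,
    totalDegree_C, zero_add]
  calc (d.prod fun i k => g i ^ k).totalDegree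
      ≤ ∑ i ∈ d.support, ((g i ^ d i).totalDegree) := totalDegree_finset_prod _ _
    _ ≤ ∑ i ∈ d.support, d i := by
        refine Finset.sum_le_sum fun i _ => ?_
        exact (totalDegree_pow _ _).trans (by
          calc d i * (g i).totalDegree ≤ d i * 1 := Nat.mul_le_mul_left _ (hg i)
            _ = d i := Nat.mul_one _)
    _ ≤ p.totalDegree := le_totalDegree hd

/-- Reduction of a Nullstellensatz refutation in N variables to one in n variables. -/
theorem statement11 {F : Type*} [Field F] [Fintype F] {n N m : ℕ}
    (hn : 0 < n) (hnN : n ≤ N)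
    (P : Fin m → MvPolynomial (Fin n) F)
    (R' : Fin m → MvPolynomial (Fin N) F) (C' : Fin N → MvPolynomial (Fin N) F)
    (h : (1 : MvPolynomial (Fin N) F) =
        ∑ i, R' i * MvPolynomial.rename (Fin.castLE hnN) (P i)
        + ∑ i, C' i * (MvPolynomial.X i ^ Fintype.card F - MvPolynomial.X i)) :
    ∃ (R : Fin m → MvPolynomial (Fin n) F) (C : Fin n → MvPolynomial (Fin n) F),
      (1 : MvPolynomial (Fin n) F) =
        ∑ i, R i * P i + ∑ i, C i * (MvPolynomial.X i ^ 2 - MvPolynomial.X i)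
      ∧ ∀ i, (R i).totalDegree ≤ (R' i).totalDegree := by
  classical
  set q := Fintype.card F with hq
  have hq1 : 1 ≤ q := Fintype.card_pos
  set g : Fin N → MvPolynomial (Fin n) F :=
    fun i => if h : (i : ℕ) < n then X ⟨i, h⟩ else 0 with hgdef
  have hgd : ∀ i, (g i).totalDegree ≤ 1 := by
    intro i
    by_cases hi : (i : ℕ) < n <;> simp [hgdef, hi, totalDegree_X]
  have hgc : ∀ j : Fin n, g (Fin.castLE hnN j) = X j := by
    intro j
    simp [hgdef, j.isLt]
  -- apply the substitution homomorphism
  have h2 := congrArg (aeval g) h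
  rw [map_one, map_add, map_sum, map_sum] at h2
  simp only [map_mul, map_sub, map_pow, aeval_X] at h2
  -- the renamed polynomials come back
  have hren : ∀ i, aeval g (rename (Fin.castLE hnN) (P i)) = P i := by
    intro i
    rw [aeval_rename]
    have : (g ∘ Fin.castLE hnN) = X := funext hgc
    rw [this, aeval_X_left_apply]
  simp only [hren] at h2
  -- the second sum reduces to a sum over Fin n
  have hsum : (∑ i : Fin N, aeval g (C' i) * (g i ^ q - g i))
      = ∑ j : Fin n, aeval g (C' (Fin.castLE hnN j)) * (X j ^ q - X j) := by
    have himg : ∀ j : Fin n,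
        aeval g (C' (Fin.castLE hnN j)) * (g (Fin.castLE hnN j) ^ q - g (Fin.castLE hnN j))
        = aeval g (C' (Fin.castLE hnN j)) * (X j ^ q - X j) := by
      intro j; rw [hgc]
    rw [← Finset.sum_congr rfl (fun j _ => himg j)]
    rw [← Finset.sum_image (f := fun i => aeval g (C' i) * (g i ^ q - g i))
      (g := Fin.castLE hnN) (s := Finset.univ)
      (fun a _ b _ hab => Fin.castLE_injective hnN hab)]
    refine (Finset.sum_subset (Finset.subset_univ _) ?_).symm
    intro i _ hi
    have hin : ¬ ((i : ℕ) < n) := by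
      intro hlt
      exact hi (Finset.mem_image.mpr ⟨⟨i, hlt⟩, Finset.mem_univ _, rfl⟩)
    have : g i = 0 := by simp [hgdef, hin]
    rw [this, zero_pow (by omega), sub_zero, mul_zero]
  rw [hsum] at h2
  -- factorization X^q - X = S * (X^2 - X)
  have hfac : ∀ j : Fin n, (X j : MvPolynomial (Fin n) F) ^ q - X j
      = (∑ k ∈ Finset.range (q - 1), X j ^ k) * (X j ^ 2 - X j) := by
    intro j
    have hgs := geom_sum_mul (X j : MvPolynomial (Fin n) F) (q - 1)
    have h1 : (X j : MvPolynomial (Fin n) F) ^ 2 - X j = (X j - 1) * X j := by ring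
    rw [h1, ← mul_assoc, hgs, sub_mul, one_mul, ← pow_succ, Nat.sub_add_cancel hq1]
  refine ⟨fun i => aeval g (R' i),
    fun j => aeval g (C' (Fin.castLE hnN j)) * (∑ k ∈ Finset.range (q - 1), X j ^ k),
    ?_, fun i => aux_totalDegree_aeval_le g hgd (R' i)⟩
  rw [h2]
  congr 1
  refine Finset.sum_congr rfl fun j _ => ?_
  rw [hfac j, mul_assoc]
end

section
/- Let 𝔽 be any field, X ⊆ 𝔽ⁿ any set, and P, Q ∈ 𝔽[x₁,…,xₙ] polynomials such that the image P(X) = {P(x) : x ∈ X} is finite and does not contain 0. Then there exists a polynomial R ∈ 𝔽[x₁,…,xₙ] of total degree at most deg(Q) + deg(P)·(|P(X)|−1) such that Q(x) = R(x)·P(x) for every x ∈ X. -/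
/-!
Interpolate `y ↦ y⁻¹` on the finite set `P(X)` by a univariate polynomial `I` of degree
at most `|P(X)| - 1`. Then `I ∘ P` agrees with `1 / P` on `X`, so `R = Q · (I ∘ P)` works,
and its total degree is at most `deg Q + deg I · deg P`.
-/

open Finset Polynomial

theorem MvPolynomial.totalDegree_polynomial_aeval_le {σ R : Type*} [CommSemiring R]
    (P : MvPolynomial σ R) (I : R[X]) :
    (Polynomial.aeval P I).totalDegree ≤ I.natDegree * P.totalDegree := by
  rw [Polynomial.aeval_eq_sum_range]
  refine (totalDegree_finsetSum _ _).trans (Finset.sup_le fun i hi => ?_)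
  calc (I.coeff i • P ^ i).totalDegree ≤ (P ^ i).totalDegree := totalDegree_smul_le _ _
    _ ≤ i * P.totalDegree := totalDegree_pow _ _
    _ ≤ I.natDegree * P.totalDegree :=
      Nat.mul_le_mul_right _ (Nat.lt_succ_iff.mp (mem_range.mp hi))

theorem MvPolynomial.eval_polynomial_aeval {σ R : Type*} [CommSemiring R]
    (x : σ → R) (P : MvPolynomial σ R) (I : R[X]) :
    eval x (Polynomial.aeval P I) = I.eval (eval x P) := by
  simpa using (aeval_algHom_apply (MvPolynomial.aeval x) P I).symm

theorem Polynomial.exists_natDegree_le_eval_eq {F : Type*} [Field F] [DecidableEq F]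
    (s : Finset F) (f : F → F) :
    ∃ I : F[X], I.natDegree ≤ #s - 1 ∧ ∀ y ∈ s, I.eval y = f y := by
  refine ⟨Lagrange.interpolate s id f, ?_, fun y hy =>
    Lagrange.eval_interpolate_at_node f Function.injective_id.injOn hy⟩
  have hlt := Lagrange.degree_interpolate_lt (r := f) Function.injective_id.injOn (s := s)
  rcases eq_or_ne (Lagrange.interpolate s id f) 0 with h | h
  · simp [h]
  · have := (natDegree_lt_iff_degree_lt h).mpr hlt
    omega

/-- The case of a single polynomial with no zero on X: division via interpolation. -/
theorem statement13 {K : Type*} [Field K] {n : ℕ} (X : Set (Fin n → K))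
    (P Q : MvPolynomial (Fin n) K)
    (hfin : ((fun x => MvPolynomial.eval x P) '' X).Finite)
    (h0 : (0 : K) ∉ (fun x => MvPolynomial.eval x P) '' X) :
    ∃ R : MvPolynomial (Fin n) K,
      R.totalDegree ≤
        Q.totalDegree + P.totalDegree * (((fun x => MvPolynomial.eval x P) '' X).ncard - 1) ∧
      ∀ x ∈ X, MvPolynomial.eval x Q = MvPolynomial.eval x R * MvPolynomial.eval x P := by
  classical
  obtain ⟨I, hdeg, hinv⟩ := exists_natDegree_le_eval_eq hfin.toFinset (·⁻¹)
  refine ⟨Q * aeval P I, ?_, fun x hx => ?_⟩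
  · rw [Set.ncard_eq_toFinset_card _ hfin, mul_comm P.totalDegree]
    calc (Q * aeval P I).totalDegree ≤ Q.totalDegree + (aeval P I).totalDegree :=
          MvPolynomial.totalDegree_mul _ _
      _ ≤ Q.totalDegree + (#hfin.toFinset - 1) * P.totalDegree := by
          gcongr
          exact (MvPolynomial.totalDegree_polynomial_aeval_le P I).trans (Nat.mul_le_mul_right _ hdeg)
  · have hPx : MvPolynomial.eval x P ∈ (fun x => MvPolynomial.eval x P) '' X := ⟨x, hx, rfl⟩
    have hne : MvPolynomial.eval x P ≠ 0 := fun h => h0 (h ▸ hPx)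
    rw [map_mul, MvPolynomial.eval_polynomial_aeval, hinv _ (hfin.mem_toFinset.mpr hPx), mul_assoc,
      inv_mul_cancel₀ hne, mul_one]
end

section
/- Let 𝔽 be any field, let P₁,…,Pₘ ∈ 𝔽[x₁,…,xₙ], and let X ⊆ 𝔽ⁿ be a set such that the image Pᵢ(X) is finite for every 1 ≤ i ≤ m. Then the ideal of all polynomials vanishing on Z(P₁,…,Pₘ) ∩ X equals the ideal sum ⟨P₁,…,Pₘ⟩ + I(X), where I(X) is the ideal of all polynomials vanishing on X. -/
/-!
If `f` vanishes on `Z(P₁, …, Pₘ) ∩ X`, multiply it by `g = ∏ᵢ ∏_{a ∈ Pᵢ(X) \ {0}} (Pᵢ - a)`,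
a finite product by the finiteness hypothesis. A point of `X` outside `Z(P₁, …, Pₘ)` is a root
of some factor of `g`, so `f g ∈ I(X)`; and modulo `⟨P₁, …, Pₘ⟩` the polynomial `g` is the
nonzero constant `c = ∏ᵢ ∏ₐ (-a)`. Hence `c f = f g + f (c - g) ∈ I(X) + ⟨P₁, …, Pₘ⟩`.
-/

open MvPolynomial

namespace Ideal

variable {R : Type*} [CommRing R]

theorem mem_sup_of_isUnit_sub_mem_of_mul_mem {I J : Ideal R} {u g f : R} (hu : IsUnit u)
    (hI : u - g ∈ I) (hJ : f * g ∈ J) : f ∈ I ⊔ J := by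
  refine ((I ⊔ J).mul_unit_mem_iff_mem hu).mp ?_
  rw [show f * u = f * (u - g) + f * g by ring]
  exact add_mem (mem_sup_left (mul_mem_left _ _ hI)) (mem_sup_right hJ)

theorem prod_sub_sub_prod_neg_mem {ι : Type*} {I : Ideal R} (s : Finset ι) {r : ι → R}
    (f : ι → R) (hr : ∀ i ∈ s, r i ∈ I) : ∏ i ∈ s, (r i - f i) - ∏ i ∈ s, -f i ∈ I := by
  rw [← Quotient.eq, map_prod, map_prod]
  refine Finset.prod_congr rfl fun i hi => ?_
  rw [map_sub, map_neg, Quotient.eq_zero_iff_mem.mpr (hr i hi), zero_sub]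

end Ideal

namespace MvPolynomial

variable {K σ ι : Type*} [Field K]

theorem span_range_le_vanishingIdeal_zeros (P : ι → MvPolynomial σ K) :
    Ideal.span (Set.range P) ≤ vanishingIdeal K {x | ∀ i, eval x (P i) = 0} := by
  rw [Ideal.span_le]
  rintro _ ⟨i, rfl⟩ x hx
  exact hx i

theorem vanishingIdeal_zeros_inter_le [Fintype ι] (P : ι → MvPolynomial σ K) (X : Set (σ → K))
    (hfin : ∀ i, ((fun x => eval x (P i)) '' X).Finite) :
    vanishingIdeal K ({x | ∀ i, eval x (P i) = 0} ∩ X) ≤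
      Ideal.span (Set.range P) ⊔ vanishingIdeal K X := by
  classical
  intro f hf
  let roots : Finset (Σ _ : ι, K) := Finset.univ.sigma fun i => (hfin i).toFinset.erase 0
  refine Ideal.mem_sup_of_isUnit_sub_mem_of_mul_mem (u := C (∏ p ∈ roots, -p.2))
    (g := ∏ p ∈ roots, (P p.1 - C p.2)) ?_ ?_ ?_
  · refine (isUnit_iff_ne_zero.mpr (Finset.prod_ne_zero_iff.mpr fun p hp => ?_)).map C
    exact neg_ne_zero.mpr (Finset.mem_erase.mp (Finset.mem_sigma.mp hp).2).1
  · rw [map_prod, ← neg_sub, neg_mem_iff]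
    simp only [map_neg]
    exact Ideal.prod_sub_sub_prod_neg_mem roots _ fun p _ => Ideal.subset_span ⟨p.1, rfl⟩
  · intro x hx
    change eval x (f * _) = 0
    rw [map_mul]
    by_cases hz : ∀ i, eval x (P i) = 0
    · exact mul_eq_zero_of_left (hf x ⟨hz, hx⟩) _
    · obtain ⟨i, hi⟩ := not_forall.mp hz
      have hmem : ⟨i, eval x (P i)⟩ ∈ roots := by simpa [roots] using ⟨hi, x, hx, rfl⟩
      rw [map_prod]
      exact mul_eq_zero_of_right _ (Finset.prod_eq_zero hmem (by simp))

end MvPolynomial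

/-- Qualitative "finite" Nullstellensatz: I(Z(P_1,...,P_m) ∩ X) = ⟨P_1,...,P_m⟩ + I(X). -/
theorem statement14 {K : Type*} [Field K] {n m : ℕ}
    (P : Fin m → MvPolynomial (Fin n) K) (X : Set (Fin n → K))
    (hfin : ∀ i, ((fun x => MvPolynomial.eval x (P i)) '' X).Finite) :
    MvPolynomial.vanishingIdeal K
        ({x : Fin n → K | ∀ i, MvPolynomial.eval x (P i) = 0} ∩ X) =
      Ideal.span (Set.range P) + MvPolynomial.vanishingIdeal K X := by
  rw [Ideal.add_eq_sup]
  refine le_antisymm (vanishingIdeal_zeros_inter_le P X hfin) (sup_le ?_ ?_)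
  · exact (span_range_le_vanishingIdeal_zeros P).trans
      (vanishingIdeal_anti_mono Set.inter_subset_left)
  · exact vanishingIdeal_anti_mono Set.inter_subset_right
end

section
/- Let F ≥ 1 be an integer and let X = {−F,…,−1,1,…,F} ⊆ ℝ. Then every polynomial R ∈ ℝ[x] satisfying R(x)·x² = x for every x ∈ X (equivalently R(x) = 1/x for all x ∈ X) has degree at least 2F − 1. In particular, with P = x² and Q = x, for which |P(X)| = F, no R of degree at most 2(F−1) satisfies Q ≡_X R·P. -/
/-- The case m = 1 of the "finite" Nullstellensatz requires the bound dF. -/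
theorem statement16 (F : ℕ) (hF : 1 ≤ F)
    (X : Set ℝ) (hX : X = {x : ℝ | ∃ k : ℤ, k ≠ 0 ∧ |k| ≤ (F : ℤ) ∧ x = (k : ℝ)}) :
    (∀ R : Polynomial ℝ, (∀ x ∈ X, R.eval x * x ^ 2 = x) → 2 * F - 1 ≤ R.natDegree) ∧
    ¬ ∃ R : Polynomial ℝ, R.natDegree ≤ 2 * (F - 1) ∧ ∀ x ∈ X, R.eval x * x ^ 2 = x := by
  have main : ∀ R : Polynomial ℝ, (∀ x ∈ X, R.eval x * x ^ 2 = x) → 2 * F - 1 ≤ R.natDegree := by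
    intro R hR
    set p : Polynomial ℝ := Polynomial.X * R - 1 with hp
    have hp0 : p ≠ 0 := by
      intro h
      have := congrArg (Polynomial.eval (0 : ℝ)) h
      simp [hp] at this
    -- each nonzero integer k with |k| ≤ F gives a root of p
    have hroot : ∀ k : ℤ, k ≠ 0 → |k| ≤ (F : ℤ) → p.eval (k : ℝ) = 0 := by
      intro k hk hkF
      have hkX : ((k : ℝ)) ∈ X := by
        rw [hX]; exact ⟨k, hk, hkF, rfl⟩
      have hk0 : (k : ℝ) ≠ 0 := Int.cast_ne_zero.mpr hk
      have h := hR _ hkX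
      have h1 : R.eval (k : ℝ) * (k : ℝ) = 1 := by
        have : (R.eval (k : ℝ) * (k : ℝ)) * (k : ℝ) = 1 * (k : ℝ) := by
          linear_combination h
        exact mul_right_cancel₀ hk0 this
      simp [hp, Polynomial.eval_mul, Polynomial.eval_sub]
      linarith [h1]
    -- the finset of such roots has 2F elements
    set S : Finset ℝ := (Finset.Icc (-(F : ℤ)) F \ {0}).image (Int.cast : ℤ → ℝ) with hS
    have hcard : S.card = 2 * F := by
      rw [hS, Finset.card_image_of_injective _ Int.cast_injective,
        Finset.card_sdiff_of_subset (by simp [Finset.mem_Icc])]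
      simp [Int.card_Icc]
      omega
    have hSsub : S ⊆ p.roots.toFinset := by
      intro x hx
      rw [hS, Finset.mem_image] at hx
      obtain ⟨k, hk, rfl⟩ := hx
      simp only [Finset.mem_sdiff, Finset.mem_Icc, Finset.mem_singleton] at hk
      rw [Multiset.mem_toFinset, Polynomial.mem_roots hp0]
      exact hroot k hk.2 (abs_le.mpr hk.1)
    have h2F : 2 * F ≤ p.natDegree := by
      calc 2 * F = S.card := hcard.symm
        _ ≤ p.roots.toFinset.card := Finset.card_le_card hSsub
        _ ≤ Multiset.card p.roots := p.roots.toFinset_card_le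
        _ ≤ p.natDegree := Polynomial.card_roots' p
    have hdeg : p.natDegree ≤ R.natDegree + 1 := by
      calc p.natDegree ≤ max (Polynomial.X * R).natDegree (1 : Polynomial ℝ).natDegree :=
            Polynomial.natDegree_sub_le _ _
        _ ≤ R.natDegree + 1 := by
            simp only [Polynomial.natDegree_one, max_le_iff]
            exact ⟨le_trans (Polynomial.natDegree_mul_le)
              (by simp [Polynomial.natDegree_X, add_comm]), by omega⟩
    omega
  refine ⟨main, ?_⟩
  rintro ⟨R, hRd, hR⟩
  have := main R hR
  omega
end

section
/- For every integer F ≥ 1, viewing X = {−F,…,−1,1,…,F} as a subset of ℚ (with |X| = 2F), the leading coefficient of the unique polynomial R of degree less than 2F with R(i) = 1/i for every i ∈ X satisfies Σ_{i ∈ X} (1/i)·Π_{j ∈ X, j ≠ i} 1/(i − j) = (−1)^{F+1}/(F!)², which is nonzero. -/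
/-!
Adjoining the node `0` turns the summand `(1/i) · ∏_{j ≠ i} 1/(i - j)` into the Lagrange weight of
`i` for the nodes `{-F, …, F}`. These weights sum to zero (they are the coefficients of `x^{2F}` in
the interpolant of the constant `1`), so the sum is minus the weight of `0`, namely
`-∏_{j ∈ X} 1/(0 - j) = -1/((-1)^F (F!)²)`.
-/

open Finset Polynomial Lagrange

namespace Lagrange

variable {F : Type*} [Field F] {ι : Type*} [DecidableEq ι] {s : Finset ι} {v : ι → F}

theorem coeff_interpolate_card_sub_one (hvs : Set.InjOn v s) (r : ι → F) :
    (interpolate s v r).coeff (#s - 1) = ∑ i ∈ s, r i * ∏ j ∈ s.erase i, (v i - v j)⁻¹ := by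
  rw [coeff_eq_sum hvs (degree_interpolate_lt r hvs)]
  refine sum_congr rfl fun i hi => ?_
  rw [eval_interpolate_at_node r hvs hi, prod_inv_distrib, div_eq_mul_inv]

theorem sum_nodalWeight_eq_zero (hvs : Set.InjOn v s) (hs : 2 ≤ #s) :
    ∑ i ∈ s, nodalWeight s v i = 0 := by
  have h := coeff_eq_sum hvs (P := 1) (by rw [degree_one]; exact_mod_cast (by omega : 0 < #s))
  rw [coeff_one, if_neg (by omega)] at h
  simpa [nodalWeight, prod_inv_distrib, div_eq_mul_inv] using h.symm

theorem sum_inv_sub_mul_nodalWeight_of_notMem {a : ι} (hvs : Set.InjOn v ↑(insert a s))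
    (ha : a ∉ s) (hs : s.Nonempty) :
    ∑ i ∈ s, (v i - v a)⁻¹ * nodalWeight s v i = -∏ j ∈ s, (v a - v j)⁻¹ := by
  have h := sum_nodalWeight_eq_zero hvs
    (by rw [card_insert_of_notMem ha]; exact Nat.succ_le_succ hs.card_pos)
  rw [sum_insert ha, nodalWeight, erase_insert ha] at h
  have hweight : ∀ i ∈ s, nodalWeight (insert a s) v i = (v i - v a)⁻¹ * nodalWeight s v i :=
    fun i hi => by
      rw [nodalWeight, erase_insert_of_ne (ne_of_mem_of_not_mem hi ha).symm,
        prod_insert (fun h => ha (mem_of_mem_erase h)), nodalWeight]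
  rw [sum_congr rfl hweight] at h
  linear_combination h

end Lagrange

namespace Int

theorem Icc_neg_succ_erase_zero (n : ℕ) :
    (Icc (-((n + 1 : ℕ) : ℤ)) (n + 1 : ℕ)).erase 0 =
      insert ((n + 1 : ℕ) : ℤ) (insert (-((n + 1 : ℕ) : ℤ)) ((Icc (-(n : ℤ)) n).erase 0)) := by
  ext x; simp only [mem_erase, mem_Icc, mem_insert]; omega

theorem prod_neg_Icc_erase_zero (n : ℕ) :
    ∏ j ∈ (Icc (-(n : ℤ)) n).erase 0, (-(j : ℚ)) = (-1) ^ n * (n.factorial : ℚ) ^ 2 := by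
  induction n with
  | zero => simp
  | succ n ih =>
    rw [Icc_neg_succ_erase_zero, prod_insert (by simp; omega), prod_insert (by simp), ih,
      Nat.factorial_succ]
    push_cast; ring

theorem card_Icc_erase_zero (n : ℕ) : #((Icc (-(n : ℤ)) n).erase 0) = 2 * n := by
  rw [card_erase_of_mem (by simp), card_Icc]; omega

end Int

/-- Leading coefficient of the interpolant of 1/x on {-F,...,-1,1,...,F}. -/
theorem statement17 (F : ℕ) (hF : 1 ≤ F)
    (X : Finset ℤ) (hX : X = (Finset.Icc (-(F : ℤ)) (F : ℤ)).erase 0) :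
    (Lagrange.interpolate X (fun i => (i : ℚ)) (fun i => ((i : ℚ))⁻¹)).coeff (2 * F - 1) =
        ∑ i ∈ X, (i : ℚ)⁻¹ * ∏ j ∈ X.erase i, ((i : ℚ) - (j : ℚ))⁻¹ ∧
    ∑ i ∈ X, (i : ℚ)⁻¹ * ∏ j ∈ X.erase i, ((i : ℚ) - (j : ℚ))⁻¹ =
        (-1) ^ (F + 1) / (F.factorial : ℚ) ^ 2 ∧
    ((-1 : ℚ) ^ (F + 1) / (F.factorial : ℚ) ^ 2) ≠ 0 := by
  subst hX
  have hinj : Set.InjOn (fun i : ℤ => (i : ℚ)) ↑(insert 0 ((Icc (-(F : ℤ)) F).erase 0)) :=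
    Int.cast_injective.injOn
  refine ⟨?_, ?_, by simp [Nat.factorial_ne_zero]⟩
  · rw [← Int.card_Icc_erase_zero]
    exact coeff_interpolate_card_sub_one (hinj.mono (subset_insert _ _)) _
  · have hsum := sum_inv_sub_mul_nodalWeight_of_notMem hinj (notMem_erase 0 _)
      ⟨1, by simp only [mem_erase, mem_Icc]; omega⟩
    simp only [nodalWeight, Int.cast_zero, sub_zero, zero_sub] at hsum
    rw [hsum, prod_inv_distrib, Int.prod_neg_Icc_erase_zero, mul_inv, ← inv_pow, inv_neg_one,
      pow_succ, div_eq_mul_inv]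
    ring
end
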